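/- arXiv:2603.12272 — 2 statements merged into one kernel-verified Lean document; each statement's English description precedes it below -/
import Mathlib

section
/- Let α > 2, κ > 0, γ ≥ 1, δ ∈ (0,1), and let Y = (Y_1, …, Y_d) be a random vector such that each coordinate satisfies the sub-Gaussian tail bound P(|Y_i| ≥ t) ≤ 2 exp(−t² / (2 κ² v_i)) for all t > 0, where v_1, …, v_d > 0. Assume the decreasing rearrangement of (v_1,…,v_d) satisfies v_(j) ≤ γ · j^{−1/(α−1)} for all j ∈ {1,…,d}. Then with probability at least 1 − δ, for every j ∈ {1,…,d}: |Y|_(j) ≤ κ √(2 γ log(2d/δ)) · j^{−1/(2(α−1))}; equivalently, Y lies in the weak-ℓ_{p(α)} ball of radius κ√(2γ log(2d/δ)) with p(α) = 2(α−1). -/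
open MeasureTheory

/-!
Put `L = log (2d/δ)` and `tᵢ = κ √(2 L vᵢ)`. The sub-Gaussian tail gives `P(tᵢ ≤ |Yᵢ|) ≤ 2e⁻ᴸ = δ/d`,
so by a union bound all `|Yᵢ| < tᵢ` with probability at least `1 - δ`. On that event the `j`-th
largest `|Yᵢ|` is at most the `j`-th largest `tᵢ`, which is `κ √(2 L v_(j)) ≤ κ √(2γL) j^(-1/(2(α-1)))`.
Comparing the two rearrangements is a pigeonhole argument: among the `j` largest `|Yᵢ|`, some index
has rank at least `j` in the decreasing order of `v`.
-/
theorem Fin.exists_le_and_le_apply_of_injective {n : ℕ} {f : Fin n → Fin n}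
    (hf : Function.Injective f) (j : Fin n) : ∃ m ≤ j, j ≤ f m := by
  by_contra! h
  have hmaps : Set.MapsTo f (Finset.Iic j) (Finset.Iio j) := fun m hm =>
    Finset.mem_Iio.2 (h m (Finset.mem_Iic.1 hm))
  have := Finset.card_le_card_of_injOn f hmaps hf.injOn
  simp only [Fin.card_Iic, Fin.card_Iio] at this
  omega

theorem Fin.sorted_apply_le_of_le {β : Type*} [Preorder β] {n : ℕ} {f g : Fin n → β}
    (hfg : f ≤ g) {σ τ : Equiv.Perm (Fin n)} (hσ : Antitone (f ∘ σ)) (hτ : Antitone (g ∘ τ))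
    (j : Fin n) : f (σ j) ≤ g (τ j) := by
  obtain ⟨m, hmj, hjm⟩ :=
    Fin.exists_le_and_le_apply_of_injective (τ.symm.injective.comp σ.injective) j
  calc f (σ j) ≤ f (σ m) := hσ hmj
    _ ≤ g (σ m) := hfg _
    _ = g (τ (τ.symm (σ m))) := by rw [Equiv.apply_symm_apply]
    _ ≤ g (τ j) := hτ hjm

theorem Real.sqrt_mul_rpow {c x : ℝ} (hx : 0 ≤ x) (r : ℝ) : √(c * x ^ r) = √c * x ^ (r / 2) := by
  rw [Real.sqrt_mul' c (Real.rpow_nonneg hx r), Real.sqrt_eq_rpow (x ^ r), ← Real.rpow_mul hx]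
  ring_nf

theorem Real.two_mul_exp_neg_log_two_mul_div {x δ : ℝ} (hx : 0 < x) (hδ : 0 < δ) :
    2 * Real.exp (-Real.log (2 * x / δ)) = δ / x := by
  rw [Real.exp_neg, Real.exp_log (by positivity)]
  field_simp

section Probability

variable {Ω : Type*} [MeasurableSpace Ω] {μ : Measure Ω}

theorem ofReal_one_sub_le_prob_compl [IsProbabilityMeasure μ] {s : Set Ω} {δ : ℝ} (hδ : 0 ≤ δ)
    (hs : μ s ≤ ENNReal.ofReal δ) : ENNReal.ofReal (1 - δ) ≤ μ sᶜ := by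
  rw [ENNReal.ofReal_sub _ hδ, ENNReal.ofReal_one, tsub_le_iff_left, ← measure_univ (μ := μ)]
  exact (measure_univ_le_add_compl s).trans (add_le_add_left hs _)

theorem measure_iUnion_le_ofReal_of_le_div_card {ι : Type*} [Fintype ι] {A : ι → Set Ω}
    {δ : ℝ} (hδ : 0 ≤ δ) (hA : ∀ i, μ (A i) ≤ ENNReal.ofReal (δ / Fintype.card ι)) :
    μ (⋃ i, A i) ≤ ENNReal.ofReal δ := by
  calc μ (⋃ i, A i) ≤ ∑ i, μ (A i) := measure_iUnion_fintype_le μ A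
    _ ≤ ∑ _ : ι, ENNReal.ofReal (δ / Fintype.card ι) := Finset.sum_le_sum fun i _ => hA i
    _ = ENNReal.ofReal (Fintype.card ι * (δ / Fintype.card ι)) := by
      rw [Finset.sum_const, Finset.card_univ, nsmul_eq_mul, ENNReal.ofReal_mul (by positivity),
        ENNReal.ofReal_natCast]
    _ ≤ ENNReal.ofReal δ := ENNReal.ofReal_le_ofReal <| by
      rcases eq_or_ne (Fintype.card ι : ℝ) 0 with h | h <;> simp [h, hδ, mul_div_cancel₀]

theorem measure_sqrt_le_abs_le_of_subgaussian {X : Ω → ℝ} {κ v L : ℝ} (hκ : 0 < κ) (hv : 0 < v)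
    (hL : 0 < L) (htail : ∀ t : ℝ, 0 < t →
      μ {ω | t ≤ |X ω|} ≤ ENNReal.ofReal (2 * Real.exp (-(t ^ 2) / (2 * κ ^ 2 * v)))) :
    μ {ω | κ * √(2 * L * v) ≤ |X ω|} ≤ ENNReal.ofReal (2 * Real.exp (-L)) := by
  have hexponent : -(κ * √(2 * L * v)) ^ 2 / (2 * κ ^ 2 * v) = -L := by
    rw [mul_pow, Real.sq_sqrt (by positivity)]
    field_simp
  simpa only [hexponent] using htail (κ * √(2 * L * v)) (by positivity)

end Probability

theorem subgaussian_powerlaw_weak_lp_ball_general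
    {Ω : Type*} [MeasurableSpace Ω] (μ : Measure Ω) [IsProbabilityMeasure μ]
    (d : ℕ) (α κ γ δ : ℝ)
    (hκ : 0 < κ) (hδ0 : 0 < δ) (hδ1 : δ < 1)
    (Y : Fin d → Ω → ℝ) (v : Fin d → ℝ) (hv : ∀ i, 0 < v i)
    (htail : ∀ i, ∀ t : ℝ, 0 < t →
      μ {ω | t ≤ |Y i ω|}
        ≤ ENNReal.ofReal (2 * Real.exp (-(t ^ 2) / (2 * κ ^ 2 * v i))))
    (τ : Equiv.Perm (Fin d))
    (hτ : Antitone (fun j : Fin d => v (τ j)))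
    (hvdecay : ∀ j : Fin d,
      v (τ j) ≤ γ * (((j : ℕ) : ℝ) + 1) ^ (-(1 / (α - 1)))) :
    ENNReal.ofReal (1 - δ)
      ≤ μ {ω | ∀ σ : Equiv.Perm (Fin d),
            Antitone (fun j : Fin d => |Y (σ j) ω|) →
            ∀ j : Fin d,
              |Y (σ j) ω|
                ≤ κ * Real.sqrt (2 * γ * Real.log (2 * d / δ)) *
                    (((j : ℕ) : ℝ) + 1) ^ (-(1 / (2 * (α - 1))))} := by
  set L := Real.log (2 * d / δ)
  set t : Fin d → ℝ := fun i => κ * √(2 * L * v i)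
  have hL (i : Fin d) : 0 < L := by
    have hd : (1 : ℝ) ≤ d := by exact_mod_cast i.pos
    exact Real.log_pos <| (one_lt_div hδ0).2 (by linarith)
  have hbad : μ (⋃ i, {ω | t i ≤ |Y i ω|}) ≤ ENNReal.ofReal δ := by
    refine measure_iUnion_le_ofReal_of_le_div_card hδ0.le fun i => ?_
    rw [Fintype.card_fin, ← Real.two_mul_exp_neg_log_two_mul_div (by exact_mod_cast i.pos) hδ0]
    exact measure_sqrt_le_abs_le_of_subgaussian hκ (hv i) (hL i) (htail i)
  refine (ofReal_one_sub_le_prob_compl hδ0.le hbad).trans (measure_mono fun ω hω σ hσ j => ?_)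
  simp only [Set.mem_compl_iff, Set.mem_iUnion, Set.mem_ofPred_eq, not_exists, not_le] at hω
  have ht : Antitone (t ∘ τ) := fun a b hab => by
    have := hL a
    simp only [t, Function.comp_apply]
    gcongr
    exact hτ hab
  have hexponent : -(1 / (α - 1)) / 2 = -(1 / (2 * (α - 1))) := by
    rw [neg_div, div_div, mul_comm]
  calc |Y (σ j) ω| ≤ t (τ j) := Fin.sorted_apply_le_of_le (fun i => (hω i).le) hσ ht j
    _ ≤ κ * √((2 * γ * L) * (((j : ℕ) : ℝ) + 1) ^ (-(1 / (α - 1)))) :=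
      mul_le_mul_of_nonneg_left (Real.sqrt_le_sqrt (by nlinarith [hvdecay j, hL j])) hκ.le
    _ = _ := by rw [Real.sqrt_mul_rpow (by positivity), hexponent, ← mul_assoc]

/-- **High-probability weak-ℓp membership of a sub-Gaussian random vector with
power-law variance profile.**  Let `α > 2`, `κ > 0`, `γ ≥ 1`, `δ ∈ (0,1)`, and
let `Y = (Y_1, …, Y_d)` be a random vector whose coordinates satisfy
`P(|Y_i| ≥ t) ≤ 2 exp(−t² / (2 κ² v_i))` for all `t > 0`, with `v_i > 0`.
Assume the decreasing rearrangement of `v` (realized by a sorting permutation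
`τ`) satisfies `v_(j) ≤ γ · j^(−1/(α−1))` for all `j`.  Then with probability
at least `1 − δ`, for every `j`:
`|Y|_(j) ≤ κ √(2 γ log(2d/δ)) · j^(−1/(2(α−1)))`, i.e. `Y` lies in the
weak-ℓ_{p(α)} ball of radius `κ √(2γ log(2d/δ))` with `p(α) = 2(α−1)`.
(The decreasing rearrangement of `Y(ω)` is expressed via any permutation `σ`
sorting the magnitudes `|Y_i(ω)|` in nonincreasing order.) -/
theorem subgaussian_powerlaw_weak_lp_ball
    {Ω : Type*} [MeasurableSpace Ω] (μ : Measure Ω) [IsProbabilityMeasure μ]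
    (d : ℕ) (hd : 1 ≤ d) (α κ γ δ : ℝ)
    (hα : 2 < α) (hκ : 0 < κ) (hγ : 1 ≤ γ) (hδ0 : 0 < δ) (hδ1 : δ < 1)
    (Y : Fin d → Ω → ℝ) (v : Fin d → ℝ) (hv : ∀ i, 0 < v i)
    (htail : ∀ i, ∀ t : ℝ, 0 < t →
      μ {ω | t ≤ |Y i ω|}
        ≤ ENNReal.ofReal (2 * Real.exp (-(t ^ 2) / (2 * κ ^ 2 * v i))))
    (τ : Equiv.Perm (Fin d))
    (hτ : Antitone (fun j : Fin d => v (τ j)))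
    (hvdecay : ∀ j : Fin d,
      v (τ j) ≤ γ * (((j : ℕ) : ℝ) + 1) ^ (-(1 / (α - 1)))) :
    ENNReal.ofReal (1 - δ)
      ≤ μ {ω | ∀ σ : Equiv.Perm (Fin d),
            Antitone (fun j : Fin d => |Y (σ j) ω|) →
            ∀ j : Fin d,
              |Y (σ j) ω|
                ≤ κ * Real.sqrt (2 * γ * Real.log (2 * d / δ)) *
                    (((j : ℕ) : ℝ) + 1) ^ (-(1 / (2 * (α - 1))))} :=
  subgaussian_powerlaw_weak_lp_ball_general μ d α κ γ δ hκ hδ0 hδ1 Y v hv htail τ hτ hvdecay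
end

section
/- Let α > 2, κ > 0, γ ≥ 1, δ ∈ (0,1), and let Y = (Y_1, …, Y_d) be a random vector such that each coordinate satisfies P(|Y_i| ≥ t) ≤ 2 exp(−t² / (2 κ² v_i)) for all t > 0, where v_1, …, v_d > 0 and the decreasing rearrangement satisfies v_(j) ≤ γ · j^{−1/(α−1)} for all j. Then with probability at least 1 − δ, simultaneously for every K ∈ {1,…,d}, the Top-K truncation error satisfies ‖Y − T_K(Y)‖₂² ≤ 2 γ κ² log(2d/δ) · ((α−1)/(α−2)) · (d^{(α−2)/(α−1)} − K^{(α−2)/(α−1)}). -/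
/-!
By a union bound over the `d` coordinates, outside an event of probability at most `δ` every
coordinate satisfies `Y_i² ≤ 2κ² log(2d/δ) v_i`. On that event a pigeonhole argument shows that
the `j`-th largest `Y_i²` is at most `2κ² log(2d/δ)` times the `j`-th largest `v_i`, so the
Top-K error is at most `2γκ² log(2d/δ) ∑_{K ≤ j < d} (j+1)^(-1/(α-1))`, and this power sum is
bounded by the integral `∫_K^d x^(-1/(α-1)) dx`.
-/

open MeasureTheory Finset Real
open scoped ENNReal

theorem measure_sq_gt_le_of_subgaussian_tail {Ω : Type*} [MeasurableSpace Ω] {μ : Measure Ω}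
    {X : Ω → ℝ} {κ v s : ℝ} (hκ : κ ≠ 0) (hv : 0 < v) (hs : 0 < s)
    (hX : ∀ t : ℝ, 0 < t →
      μ {ω | t ≤ |X ω|} ≤ ENNReal.ofReal (2 * exp (-(t ^ 2) / (2 * κ ^ 2 * v)))) :
    μ {ω | 2 * κ ^ 2 * v * s < X ω ^ 2} ≤ ENNReal.ofReal (2 * exp (-s)) := by
  set t := √(2 * κ ^ 2 * v * s)
  calc μ {ω | 2 * κ ^ 2 * v * s < X ω ^ 2} ≤ μ {ω | t ≤ |X ω|} :=
        measure_mono fun ω hω => (sqrt_le_sqrt hω.le).trans_eq (sqrt_sq_eq_abs _)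
    _ ≤ _ := hX t (sqrt_pos.2 (by positivity))
    _ = _ := by rw [sq_sqrt (by positivity)]; congr 3; field_simp

theorem measure_exists_sq_gt_le_of_subgaussian_tail {Ω ι : Type*} [MeasurableSpace Ω]
    {μ : Measure Ω} [Fintype ι] {Y : ι → Ω → ℝ} {κ s : ℝ} {v : ι → ℝ} (hκ : κ ≠ 0)
    (hv : ∀ i, 0 < v i) (hs : 0 < s)
    (hY : ∀ i, ∀ t : ℝ, 0 < t →
      μ {ω | t ≤ |Y i ω|} ≤ ENNReal.ofReal (2 * exp (-(t ^ 2) / (2 * κ ^ 2 * v i)))) :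
    μ {ω | ∃ i, 2 * κ ^ 2 * v i * s < Y i ω ^ 2}
      ≤ Fintype.card ι * ENNReal.ofReal (2 * exp (-s)) := by
  rw [Set.ofPred_exists]
  calc _ ≤ ∑ i, μ {ω | 2 * κ ^ 2 * v i * s < Y i ω ^ 2} := measure_iUnion_fintype_le μ _
    _ ≤ ∑ _i : ι, ENNReal.ofReal (2 * exp (-s)) := sum_le_sum fun i _ =>
        measure_sq_gt_le_of_subgaussian_tail hκ (hv i) hs (hY i)
    _ = _ := by simp

theorem ofReal_one_sub_le_measure_compl {Ω : Type*} [MeasurableSpace Ω] {μ : Measure Ω}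
    [IsProbabilityMeasure μ] {s : Set Ω} {δ : ℝ} (hδ : 0 ≤ δ) (hs : μ s ≤ ENNReal.ofReal δ) :
    ENNReal.ofReal (1 - δ) ≤ μ sᶜ := by
  rw [ENNReal.ofReal_sub _ hδ, ENNReal.ofReal_one, tsub_le_iff_right]
  calc 1 = μ Set.univ := measure_univ.symm
    _ ≤ μ sᶜ + μ s := by rw [add_comm]; exact measure_univ_le_add_compl s
    _ ≤ μ sᶜ + ENNReal.ofReal δ := by gcongr

theorem Equiv.Perm.exists_le_le_apply {n : ℕ} (e : Equiv.Perm (Fin n)) (j : Fin n) :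
    ∃ k ≤ j, j ≤ e k := by
  obtain ⟨_, hmem, hnot⟩ := exists_mem_notMem_of_card_lt_card
    (s := Iio j) (t := (Iic j).map e.toEmbedding) (by simp)
  obtain ⟨k, hk, rfl⟩ := mem_map.1 hmem
  exact ⟨k, mem_Iic.1 hk, not_lt.1 fun h => hnot (mem_Iio.2 h)⟩

theorem apply_perm_le_apply_perm_of_antitone {β : Type*} [Preorder β] {n : ℕ} {f g : Fin n → β}
    (hfg : ∀ i, f i ≤ g i) {σ τ : Equiv.Perm (Fin n)} (hσ : Antitone (f ∘ σ))
    (hτ : Antitone (g ∘ τ)) (j : Fin n) : f (σ j) ≤ g (τ j) := by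
  obtain ⟨k, hkj, hjk⟩ := Equiv.Perm.exists_le_le_apply (σ.trans τ.symm) j
  calc f (σ j) ≤ f (σ k) := hσ hkj
    _ ≤ g (σ k) := hfg _
    _ = g (τ (τ.symm (σ k))) := by rw [Equiv.apply_symm_apply]
    _ ≤ g (τ j) := hτ hjk

theorem sum_sq_sub_topK_eq {d K : ℕ} (x : Fin d → ℝ) (σ : Equiv.Perm (Fin d)) :
    ∑ i, (x i - if (σ.symm i : ℕ) < K then x i else 0) ^ 2
      = ∑ j : Fin d, if (j : ℕ) < K then 0 else x (σ j) ^ 2 := by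
  rw [← Equiv.sum_comp σ]
  refine sum_congr rfl fun j _ => ?_
  simp only [Equiv.symm_apply_apply]
  split_ifs <;> ring

theorem sum_fin_ite_lt_eq_sum_Ico {M : Type*} [AddCommMonoid M] {d K : ℕ} (f : ℕ → M) : ∑ j : Fin d, (if (j : ℕ) < K then 0 else f j) = ∑ j ∈ Ico K d, f j := by
  rw [Fin.sum_univ_eq_sum_range (fun j => if j < K then 0 else f j), sum_ite, sum_const_zero,
    zero_add]
  simp only [not_lt, range_eq_Ico, Ico_filter_le_of_left_le K.zero_le]

theorem sum_Ico_rpow_neg_le {p : ℝ} (hp0 : 0 ≤ p) (hp1 : p ≠ 1) {K d : ℕ} (hK : 0 < K)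
    (hKd : K ≤ d) :
    ∑ j ∈ Ico K d, ((j : ℝ) + 1) ^ (-p) ≤ ((d : ℝ) ^ (1 - p) - (K : ℝ) ^ (1 - p)) / (1 - p) := by
  have hK' : (0 : ℝ) < K := Nat.cast_pos.2 hK
  have hanti : AntitoneOn (fun x : ℝ => x ^ (-p)) (Set.Icc K d) := fun x hx y _ hxy =>
    rpow_le_rpow_of_nonpos (hK'.trans_le hx.1) hxy (by linarith)
  calc _ ≤ ∫ x in (K : ℝ)..d, x ^ (-p) := by simpa using hanti.sum_le_integral_Ico hKd
    _ = _ := by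
      rw [integral_rpow (Or.inr ⟨by contrapose! hp1; linarith, ?_⟩)]
      · ring_nf
      · rw [Set.uIcc_of_le (by exact_mod_cast hKd)]
        exact fun h => hK'.not_ge h.1

theorem sum_sq_sub_topK_le_of_sq_le {d K : ℕ} {x v : Fin d → ℝ} {c γ p : ℝ} (hc : 0 ≤ c)
    (hγ : 0 ≤ γ) (hp0 : 0 ≤ p) (hp1 : p ≠ 1) (hx : ∀ i, x i ^ 2 ≤ c * v i)
    {σ τ : Equiv.Perm (Fin d)} (hσ : Antitone fun j => |x (σ j)|)
    (hτ : Antitone fun j => v (τ j))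
    (hdecay : ∀ j : Fin d, v (τ j) ≤ γ * (((j : ℕ) : ℝ) + 1) ^ (-p)) (hK : 0 < K) (hKd : K ≤ d) :
    ∑ i, (x i - if (σ.symm i : ℕ) < K then x i else 0) ^ 2
      ≤ c * γ * (((d : ℝ) ^ (1 - p) - (K : ℝ) ^ (1 - p)) / (1 - p)) := by
  have hsorted (j : Fin d) : x (σ j) ^ 2 ≤ c * v (τ j) :=
    apply_perm_le_apply_perm_of_antitone (f := fun i => x i ^ 2) hx
      (fun _ _ hab => sq_le_sq.2 (hσ hab)) (fun _ _ hab => mul_le_mul_of_nonneg_left (hτ hab) hc) j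
  calc _ = ∑ j : Fin d, if (j : ℕ) < K then 0 else x (σ j) ^ 2 := sum_sq_sub_topK_eq x σ
    _ ≤ ∑ j : Fin d, if (j : ℕ) < K then 0 else c * γ * (((j : ℕ) : ℝ) + 1) ^ (-p) := by
        gcongr with j
        split_ifs
        · rfl
        · rw [mul_assoc]
          exact (hsorted j).trans (mul_le_mul_of_nonneg_left (hdecay j) hc)
    _ = c * γ * ∑ j ∈ Ico K d, ((j : ℝ) + 1) ^ (-p) := by
        rw [sum_fin_ite_lt_eq_sum_Ico (fun j => c * γ * ((j : ℝ) + 1) ^ (-p)), mul_sum]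
    _ ≤ _ := by gcongr; exact sum_Ico_rpow_neg_le hp0 hp1 hK hKd

/-- **High-probability Top-K truncation error bound for a sub-Gaussian random
vector with power-law variance profile.**  Let `α > 2`, `κ > 0`, `γ ≥ 1`,
`δ ∈ (0,1)`, and let `Y = (Y_1, …, Y_d)` satisfy
`P(|Y_i| ≥ t) ≤ 2 exp(−t² / (2 κ² v_i))` for all `t > 0`, with `v_i > 0` whose
decreasing rearrangement (realized by the sorting permutation `τ`) satisfies
`v_(j) ≤ γ · j^(−1/(α−1))`.  Then with probability at least `1 − δ`,
simultaneously for every `K ∈ {1,…,d}`, the Top-K truncation error satisfies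
`‖Y − T_K(Y)‖₂² ≤ 2 γ κ² log(2d/δ) · ((α−1)/(α−2)) ·
(d^((α−2)/(α−1)) − K^((α−2)/(α−1)))`.
(For each outcome `ω`, the Top-K truncation is expressed via any permutation
`σ` sorting the magnitudes `|Y_i(ω)|` in nonincreasing order: it keeps the
coordinates at sorted positions `< K` and zeroes the rest.) -/
theorem subgaussian_powerlaw_topK_error_bound
    {Ω : Type*} [MeasurableSpace Ω] (μ : Measure Ω) [IsProbabilityMeasure μ]
    (d : ℕ) (hd : 1 ≤ d) (α κ γ δ : ℝ)
    (hα : 2 < α) (hκ : 0 < κ) (hγ : 1 ≤ γ) (hδ0 : 0 < δ) (hδ1 : δ < 1)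
    (Y : Fin d → Ω → ℝ) (v : Fin d → ℝ) (hv : ∀ i, 0 < v i)
    (htail : ∀ i, ∀ t : ℝ, 0 < t →
      μ {ω | t ≤ |Y i ω|}
        ≤ ENNReal.ofReal (2 * Real.exp (-(t ^ 2) / (2 * κ ^ 2 * v i))))
    (τ : Equiv.Perm (Fin d))
    (hτ : Antitone (fun j : Fin d => v (τ j)))
    (hvdecay : ∀ j : Fin d,
      v (τ j) ≤ γ * (((j : ℕ) : ℝ) + 1) ^ (-(1 / (α - 1)))) :
    ENNReal.ofReal (1 - δ)
      ≤ μ {ω | ∀ σ : Equiv.Perm (Fin d),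
            Antitone (fun j : Fin d => |Y (σ j) ω|) →
            ∀ K : ℕ, 1 ≤ K → K ≤ d →
              (∑ i : Fin d,
                  (Y i ω - (if ((σ.symm i : ℕ) < K) then Y i ω else 0)) ^ 2)
                ≤ 2 * γ * κ ^ 2 * Real.log (2 * d / δ) *
                    ((α - 1) / (α - 2)) *
                    ((d : ℝ) ^ ((α - 2) / (α - 1)) -
                      (K : ℝ) ^ ((α - 2) / (α - 1)))} := by
  set L := Real.log (2 * d / δ)
  have hd' : (1 : ℝ) ≤ d := by exact_mod_cast hd
  have hL : 0 < L := Real.log_pos (by rw [lt_div_iff₀ hδ0]; linarith)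
  have hbad : μ {ω | ∃ i, 2 * κ ^ 2 * v i * L < Y i ω ^ 2} ≤ ENNReal.ofReal δ := by
    refine (measure_exists_sq_gt_le_of_subgaussian_tail hκ.ne' hv hL htail).trans_eq ?_
    rw [exp_neg, exp_log (by positivity), Fintype.card_fin, ← ENNReal.ofReal_natCast,
      ← ENNReal.ofReal_mul (by positivity)]
    congr 1
    field_simp
  refine (ofReal_one_sub_le_measure_compl hδ0.le hbad).trans
    (measure_mono fun ω hω σ hσ K hK hKd => ?_)
  have hY (i : Fin d) : Y i ω ^ 2 ≤ 2 * κ ^ 2 * L * v i := by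
    have := not_lt.1 fun h => hω ⟨i, h⟩
    linarith
  have hα1 : 0 < α - 1 := by linarith
  have hp1 : 1 / (α - 1) ≠ 1 := by rw [ne_eq, div_eq_one_iff_eq hα1.ne']; linarith
  have hp : 1 - 1 / (α - 1) = (α - 2) / (α - 1) := by field_simp; ring
  calc _ ≤ 2 * κ ^ 2 * L * γ *
        ((d ^ (1 - 1 / (α - 1)) - K ^ (1 - 1 / (α - 1))) / (1 - 1 / (α - 1))) :=
        sum_sq_sub_topK_le_of_sq_le (by positivity) (by linarith) (one_div_nonneg.2 hα1.le) hp1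
          hY hσ hτ hvdecay hK hKd
    _ = _ := by rw [hp]; field_simp
end
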